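/- arXiv:2107.12259 — 3 statements merged into one kernel-verified Lean document; each statement's English description precedes it below -/
import Mathlib

section
/- Let M and N be smooth manifolds with strata pairs (X_\beta, X_\alpha) in M and (Y_\delta, Y_\gamma) in N satisfying Whitney condition (b) at x \in X_\alpha and y \in Y_\gamma respectively. Then the product pair (X_\beta \times Y_\delta, X_\alpha \times Y_\gamma) satisfies Whitney condition (b) at (x,y). -/
open Filter Topology

/-- Kuratowski convergence of a sequence of linear subspaces `P n` to a subspace `Q`. -/
def SubspaceLim {E : Type*} [NormedAddCommGroup E] [NormedSpace ℝ E]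
    (P : ℕ → Submodule ℝ E) (Q : Submodule ℝ E) : Prop :=
  (∀ v ∈ Q, ∃ u : ℕ → E, (∀ n, u n ∈ P n) ∧ Tendsto u atTop (nhds v)) ∧
    (∀ u : ℕ → E, (∀ n, u n ∈ P n) → ∀ v : E, Tendsto u atTop (nhds v) → v ∈ Q)

/-- Whitney condition (b) for the pair `(S, T)` (with `T ⊂ closure S`) at `x ∈ T`:
for sequences `xₙ ∈ S`, `yₙ ∈ T` converging to `x` such that the tangent planes
`T_{xₙ}S` converge to a plane `Q` and the (normalized) secant directions
`(yₙ - xₙ)/‖yₙ - xₙ‖` converge to a vector `u`, the limit secant line lies in `Q`. -/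
def WhitneyB {E : Type*} [NormedAddCommGroup E] [NormedSpace ℝ E]
    (S T : Set E) (TanS : E → Submodule ℝ E) (x : E) : Prop :=
  ∀ (xn yn : ℕ → E) (Q : Submodule ℝ E) (u : E),
    (∀ n, xn n ∈ S) → (∀ n, yn n ∈ T) →
    Tendsto xn atTop (nhds x) → Tendsto yn atTop (nhds x) →
    SubspaceLim (fun n => TanS (xn n)) Q →
    Tendsto (fun n => ‖yn n - xn n‖⁻¹ • (yn n - xn n)) atTop (nhds u) →
    u ∈ Q

/-- The canonical Kuratowski-limit submodule of a sequence of submodules. -/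
def limSub {E : Type*} [NormedAddCommGroup E] [NormedSpace ℝ E]
    (A : ℕ → Submodule ℝ E) : Submodule ℝ E where
  carrier := {v | ∃ a : ℕ → E, (∀ n, a n ∈ A n) ∧ Tendsto a atTop (nhds v)}
  zero_mem' := ⟨fun _ => 0, fun n => (A n).zero_mem, tendsto_const_nhds⟩
  add_mem' := by
    rintro v w ⟨a, ha, hat⟩ ⟨b, hb, hbt⟩
    exact ⟨fun n => a n + b n, fun n => (A n).add_mem (ha n) (hb n), hat.add hbt⟩
  smul_mem' := by
    rintro c v ⟨a, ha, hat⟩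
    exact ⟨fun n => c • a n, fun n => (A n).smul_mem c (ha n), hat.const_smul c⟩

lemma subspaceLim_limSub {E : Type*} [NormedAddCommGroup E] [NormedSpace ℝ E]
    (A : ℕ → Submodule ℝ E) : SubspaceLim A (limSub A) :=
  ⟨fun _ hv => hv, fun a ha v hv => ⟨a, ha, hv⟩⟩

/-- Key component lemma: if the difference `q n - p n` is eventually a positive multiple
of `w n`, and `w n → v`, then `v` lies in the limit of the tangent planes. -/
lemma mem_limSub_of_whitneyB {E : Type*} [NormedAddCommGroup E] [NormedSpace ℝ E]
    {S T : Set E} {Tan : E → Submodule ℝ E} {x : E} (h : WhitneyB S T Tan x)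
    (p q : ℕ → E) (hp : ∀ n, p n ∈ S) (hq : ∀ n, q n ∈ T)
    (hpx : Tendsto p atTop (nhds x)) (hqx : Tendsto q atTop (nhds x))
    (w : ℕ → E) (v : E) (hw : Tendsto w atTop (nhds v))
    (hfac : ∀ᶠ n in atTop, ∃ c : ℝ, 0 < c ∧ q n - p n = c • w n) :
    v ∈ limSub (fun n => Tan (p n)) := by
  by_cases hv0 : v = 0
  · rw [hv0]; exact (limSub _).zero_mem
  · have hnv : ‖v‖ ≠ 0 := norm_ne_zero_iff.mpr hv0
    have heq : (fun n => ‖q n - p n‖⁻¹ • (q n - p n)) =ᶠ[atTop]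
        (fun n => ‖w n‖⁻¹ • w n) := by
      filter_upwards [hfac] with n hn
      obtain ⟨c, hc, hcw⟩ := hn
      rw [hcw, norm_smul, Real.norm_eq_abs, abs_of_pos hc, smul_smul, mul_inv,
        mul_comm c⁻¹, mul_assoc, inv_mul_cancel₀ (ne_of_gt hc), mul_one]
    have hsec : Tendsto (fun n => ‖w n‖⁻¹ • w n) atTop (nhds (‖v‖⁻¹ • v)) :=
      (hw.norm.inv₀ hnv).smul hw
    have hmem : ‖v‖⁻¹ • v ∈ limSub (fun n => Tan (p n)) :=
      h p q (limSub fun n => Tan (p n)) (‖v‖⁻¹ • v) hp hq hpx hqx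
        (subspaceLim_limSub _) (hsec.congr' heq.symm)
    have := (limSub fun n => Tan (p n)).smul_mem ‖v‖ hmem
    rwa [smul_smul, mul_inv_cancel₀ hnv, one_smul] at this

/-- if the pairs `(X_β, X_α)` in `M` and `(Y_δ, Y_γ)` in `N` satisfy
Whitney condition (b) at `x ∈ X_α` and `y ∈ Y_γ` respectively, then the product pair
`(X_β × Y_δ, X_α × Y_γ)` satisfies Whitney condition (b) at `(x, y)`. -/
theorem whitneyB_prod {E F : Type*}
    [NormedAddCommGroup E] [NormedSpace ℝ E] [NormedAddCommGroup F] [NormedSpace ℝ F]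
    (Xβ Xα : Set E) (TanXβ : E → Submodule ℝ E) (x : E)
    (Yδ Yγ : Set F) (TanYδ : F → Submodule ℝ F) (y : F)
    (hX : WhitneyB Xβ Xα TanXβ x) (hY : WhitneyB Yδ Yγ TanYδ y) :
    WhitneyB (Xβ ×ˢ Yδ) (Xα ×ˢ Yγ)
      (fun p => (TanXβ p.1).prod (TanYδ p.2)) (x, y) := by
  intro pn qn Q u hpS hqT hpx hqx hQ hu
  by_cases hu0 : u = 0
  · rw [hu0]; exact Q.zero_mem
  · set un : ℕ → E × F := fun n => ‖qn n - pn n‖⁻¹ • (qn n - pn n) with hun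
    have hev : ∀ᶠ n in atTop, qn n - pn n ≠ 0 := by
      filter_upwards [hu.eventually (isOpen_ne.eventually_mem hu0)] with n hn
      intro hcon
      apply hn
      simp [hun, hcon]
    -- convergence of components
    have hu1 : Tendsto (fun n => (un n).1) atTop (nhds u.1) :=
      (continuous_fst.tendsto u).comp hu
    have hu2 : Tendsto (fun n => (un n).2) atTop (nhds u.2) :=
      (continuous_snd.tendsto u).comp hu
    have hpx1 : Tendsto (fun n => (pn n).1) atTop (nhds x) :=
      (continuous_fst.tendsto (x, y)).comp hpx
    have hpx2 : Tendsto (fun n => (pn n).2) atTop (nhds y) :=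
      (continuous_snd.tendsto (x, y)).comp hpx
    have hqx1 : Tendsto (fun n => (qn n).1) atTop (nhds x) :=
      (continuous_fst.tendsto (x, y)).comp hqx
    have hqx2 : Tendsto (fun n => (qn n).2) atTop (nhds y) :=
      (continuous_snd.tendsto (x, y)).comp hqx
    -- factorization of differences
    have hfac1 : ∀ᶠ n in atTop, ∃ c : ℝ, 0 < c ∧ (qn n).1 - (pn n).1 = c • (un n).1 := by
      filter_upwards [hev] with n hn
      refine ⟨‖qn n - pn n‖, norm_pos_iff.mpr hn, ?_⟩
      have : (un n).1 = ‖qn n - pn n‖⁻¹ • ((qn n).1 - (pn n).1) := rfl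
      rw [this, smul_smul, mul_inv_cancel₀ (norm_ne_zero_iff.mpr hn), one_smul]
    have hfac2 : ∀ᶠ n in atTop, ∃ c : ℝ, 0 < c ∧ (qn n).2 - (pn n).2 = c • (un n).2 := by
      filter_upwards [hev] with n hn
      refine ⟨‖qn n - pn n‖, norm_pos_iff.mpr hn, ?_⟩
      have : (un n).2 = ‖qn n - pn n‖⁻¹ • ((qn n).2 - (pn n).2) := rfl
      rw [this, smul_smul, mul_inv_cancel₀ (norm_ne_zero_iff.mpr hn), one_smul]
    have h1 : u.1 ∈ limSub (fun n => TanXβ (pn n).1) :=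
      mem_limSub_of_whitneyB hX (fun n => (pn n).1) (fun n => (qn n).1)
        (fun n => ((hpS n).1)) (fun n => ((hqT n).1)) hpx1 hqx1 _ _ hu1 hfac1
    have h2 : u.2 ∈ limSub (fun n => TanYδ (pn n).2) :=
      mem_limSub_of_whitneyB hY (fun n => (pn n).2) (fun n => (qn n).2)
        (fun n => ((hpS n).2)) (fun n => ((hqT n).2)) hpx2 hqx2 _ _ hu2 hfac2
    obtain ⟨a, ha, hat⟩ := h1
    obtain ⟨b, hb, hbt⟩ := h2
    exact hQ.2 (fun n => (a n, b n)) (fun n => ⟨ha n, hb n⟩) u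
      (by simpa using hat.prodMk_nhds hbt)
end

section
/- Let \nu: X \to Y be a pushout of a Noetherian algebraic space X along a finite surjection g: D \sqcup D' \to D' (identity on D' and an isomorphism \sigma: D \to D'), where D, D' are disjoint closed subspaces, and suppose the natural map \ker[\mathcal{O}_Y \to \mathcal{O}_{D'}] \to \nu_*\ker[\mathcal{O}_X \to \mathcal{O}_{D}\oplus\mathcal{O}_{D'}] is an isomorphism (i.e., I_{D'} \cong \nu_*(I_D \cap I_{D'})). Then there is a short exact sequence of sheaves on Y: 0 \to \mathcal{O}_Y \to \nu_*\mathcal{O}_X \to \mathcal{O}_{D'} \to 0, where the third map is the difference of restriction along the two branches composed with \sigma. -/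
open CategoryTheory

/-- sheaf-theoretic content, stated in an abelian category of sheaves
on `Y`.  Data: `IY = ker[𝒪_Y → 𝒪_{D'}] ≅ ν_*(I_D ∩ I_{D'})` (Artin's identification
of kernels), `OY = 𝒪_Y`, `OV = 𝒪_{D'}`, `OX = ν_*𝒪_X`, `G = g_*(𝒪_D ⊕ 𝒪_{D'})`, with:
* the short exact sequence `0 → IY → OY → OV → 0` (ideal sequence of `D' ⊂ Y`),
* the short exact sequence `0 → IY → OX → G → 0` (pushforward of the ideal sequence of
  `D ⊔ D' ⊂ X`, with kernel identified with `IY`),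
* the short exact sequence `0 → OV → G → OV → 0` coming from the diagonal inclusion
  `f ↦ (σ^#f, f)` and the difference map `ρ : (s,t) ↦ σ-twisted difference`,
* compatibilities: `ι ≫ α = ι'` (the comorphism `α : 𝒪_Y → ν_*𝒪_X` restricts to the
  identification of ideal sheaves) and `π ≫ δ = α ≫ π'` (functions on `Y` restrict
  diagonally to `D ⊔ D'`).
Conclusion: `0 → 𝒪_Y → ν_*𝒪_X → 𝒪_{D'} → 0` is a short exact sequence, where the
third map is restriction to the two branches followed by the σ-twisted difference. -/
theorem pushout_structure_sequence {C : Type*} [Category C] [Abelian C]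
    (IY OY OV OX G : C)
    (ι : IY ⟶ OY) (π : OY ⟶ OV) (w₁ : ι ≫ π = 0)
    (h₁ : (ShortComplex.mk ι π w₁).ShortExact)
    (ι' : IY ⟶ OX) (π' : OX ⟶ G) (w₂ : ι' ≫ π' = 0)
    (h₂ : (ShortComplex.mk ι' π' w₂).ShortExact)
    (δ : OV ⟶ G) (ρ : G ⟶ OV) (w₃ : δ ≫ ρ = 0)
    (h₃ : (ShortComplex.mk δ ρ w₃).ShortExact)
    (α : OY ⟶ OX)
    (hι : ι ≫ α = ι') (hπ : π ≫ δ = α ≫ π') :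
    ∃ w : α ≫ (π' ≫ ρ) = 0, (ShortComplex.mk α (π' ≫ ρ) w).ShortExact := by
  have hmδ : Mono δ := h₃.mono_f
  have hmι' : Mono ι' := h₂.mono_f
  have heπ : Epi π := h₁.epi_g
  have heπ' : Epi π' := h₂.epi_g
  have heρ : Epi ρ := h₃.epi_g
  have w : α ≫ (π' ≫ ρ) = 0 := by
    rw [← Category.assoc, ← hπ, Category.assoc, w₃, Limits.comp_zero]
  refine ⟨w, ?_⟩
  have hmα : Mono α := by
    rw [Preadditive.mono_iff_cancel_zero]
    intro A x hx
    have hxπ : x ≫ π = 0 := by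
      rw [← cancel_mono δ, Category.assoc, hπ, ← Category.assoc, hx,
        Limits.zero_comp, Limits.zero_comp]
    obtain ⟨A', p, hp, u, hu⟩ := h₁.exact.exact_up_to_refinements x hxπ
    have : u ≫ ι' = 0 := by
      rw [← hι, ← Category.assoc, ← hu, Category.assoc, hx, Limits.comp_zero]
    have hu0 : u = 0 := by rwa [← cancel_mono ι', Limits.zero_comp]
    rw [← cancel_epi p, hu, hu0, Limits.zero_comp, Limits.comp_zero]
  refine { exact := ?_, mono_f := hmα, epi_g := epi_comp π' ρ }
  rw [ShortComplex.exact_iff_exact_up_to_refinements]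
  intro A x hx
  dsimp at x hx ⊢
  -- x ≫ π' ≫ ρ = 0, so x ≫ π' lifts through δ up to refinement
  obtain ⟨A₁, p₁, hp₁, v, hv⟩ := h₃.exact.exact_up_to_refinements (x ≫ π')
    (by rw [Category.assoc]; exact hx)
  -- lift v along the epi π up to refinement
  obtain ⟨A₂, p₂, hp₂, y, hy⟩ := surjective_up_to_refinements_of_epi π v
  -- z := p₂ ≫ p₁ ≫ x - y ≫ α kills π'
  dsimp at hv
  have hz : (p₂ ≫ p₁ ≫ x - y ≫ α) ≫ π' = 0 := by
    have hy' : p₂ ≫ v ≫ δ = y ≫ π ≫ δ := by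
      rw [← Category.assoc, hy, Category.assoc]
    rw [Preadditive.sub_comp, Category.assoc, Category.assoc, hv, hy', hπ]
    simp only [Category.assoc, sub_self]
  obtain ⟨A₃, p₃, hp₃, u, hu⟩ := h₂.exact.exact_up_to_refinements _ hz
  refine ⟨A₃, p₃ ≫ p₂ ≫ p₁, epi_comp _ _, p₃ ≫ y + u ≫ ι, ?_⟩
  dsimp at hu ⊢
  rw [Preadditive.comp_sub] at hu
  simp only [Category.assoc] at hu ⊢
  rw [Preadditive.add_comp]
  simp only [Category.assoc]
  rw [hι, ← hu]
  abel
end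

section
/- Let \nu: X \to Y be the pushout identifying two disjoint Weil divisors D, D' on a Noetherian algebraic space X via an isomorphism \sigma: D \to D'. Let L be a line bundle on X equipped with an isomorphism \phi: L|_D \to L|_{D'} covering \sigma. Then there exists a line bundle \mathcal{L} on Y with \nu^*\mathcal{L} \cong L; explicitly, \mathcal{L} is the kernel of the composite \nu_*L \to \nu_*(L|_D \oplus L|_{D'}) \to \nu_*(L|_D \oplus L|_{D'})/\Gamma_\phi, where \Gamma_\phi is the graph line subbundle of (\sigma^{-1})^*(L|_D) \oplus L|_{D'}. -/
universe u

/-- A module is invertible (a line bundle) if it admits a tensor inverse. -/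
def IsInvertibleModule (R : Type u) [CommRing R] (M : Type u)
    [AddCommGroup M] [Module R M] : Prop :=
  ∃ (N : Type u) (_ : AddCommGroup N) (_ : Module R N),
    Nonempty ((TensorProduct R M N) ≃ₗ[R] R)

/-!
Let `N` be a tensor inverse of `L`, with pairing `e : L ⊗[A] N ≃ A`, and let `M ⊆ L` be the
`B`-module of sections glued by `φ` and `M' ⊆ N` the sections pairing into `B` with all of `M`.
Because the swap of `L ⊗ L` is trivial for an invertible `L`, the restricted pairing
`F : M ⊗[B] M' → B` satisfies `F z • w = F w • z`; so once `F u = 1` for some `u`, `F` is an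
isomorphism with inverse `b ↦ b • u`, and a finite expansion of `u` yields an inverse of
`A ⊗[B] M → L`. Surjectivity of `F` is where the gluing enters. Since `I + I' = A`, every
element of `L` or `N` agrees modulo `I'` with a glued one (for `N` via the transpose of `φ`), so
the image `J` of `F` satisfies `J + c = B` for the conductor `c = B ∩ I ∩ I'`; and `c ^ 2 ⊆ J`
because `c • L ⊆ M` and `c • N ⊆ M'`. Hence `J = B`.
-/

open TensorProduct

theorem Ideal.eq_zero_of_span_eq_top_of_mul_pow_eq_zero {R : Type*} [CommRing R] {S : Set R}
    (hS : Ideal.span S = ⊤) (n : ℕ) {a : R} (h : ∀ s ∈ S, a * s ^ n = 0) : a = 0 := by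
  have hmem : (1 : R) ∈ Ideal.span ((· ^ n) '' S) := by
    rw [Ideal.span_pow_eq_top S hS n]; trivial
  have key : ∀ x ∈ Ideal.span ((· ^ n) '' S), a * x = 0 := fun x hx => by
    induction hx using Submodule.span_induction with
    | mem x hx => obtain ⟨s, hs, rfl⟩ := hx; exact h s hs
    | zero => exact mul_zero a
    | add x y _ _ hx hy => rw [mul_add, hx, hy, add_zero]
    | smul r x _ hx => rw [smul_eq_mul, mul_left_comm, hx, mul_zero]
  simpa using key 1 hmem

namespace Module.Invertible

variable {R P : Type*} [CommRing R] [AddCommGroup P] [Module R P] [Module.Invertible R P]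

theorem span_range_dual_apply_eq_top :
    Ideal.span (Set.range fun fx : Dual R P × P => fx.1 fx.2) = ⊤ := by
  obtain ⟨t, ht⟩ := (Module.Invertible.bijective (R := R) (M := P)).2 1
  obtain ⟨S, rfl⟩ := TensorProduct.exists_finset t
  rw [Ideal.eq_top_iff_one, ← ht, map_sum]
  exact Ideal.sum_mem _ fun s _ => Ideal.subset_span ⟨s, by simp⟩

theorem comm_self_eq_refl : TensorProduct.comm R P P = LinearEquiv.refl R (P ⊗[R] P) := by
  -- The swap acts as a scalar `r`; it fixes `x ⊗ x`, so `r - 1` kills every `f x ^ 2`.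
  obtain ⟨r, hr⟩ :=
    (toModuleEnd_bijective R (P ⊗[R] P)).2 (TensorProduct.comm R P P).toLinearMap
  suffices r = 1 by
    ext z
    simpa [this] using (LinearMap.congr_fun hr z).symm
  rw [← sub_eq_zero]
  refine Ideal.eq_zero_of_span_eq_top_of_mul_pow_eq_zero
    (span_range_dual_apply_eq_top (P := P)) 2 ?_
  rintro _ ⟨⟨f, x⟩, rfl⟩
  have := congr(LinearMap.mul' R R (TensorProduct.map f f $(LinearMap.congr_fun hr (x ⊗ₜ x))))
  simp only [toModuleEnd_apply, DistribSMul.toLinearMap_apply, map_smul, map_tmul,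
    LinearMap.mul'_apply, smul_eq_mul, LinearEquiv.coe_coe, comm_tmul] at this
  linear_combination this

theorem dual_apply_smul_comm (f : Dual R P) (x y : P) : f x • y = f y • x := by
  simpa using (congr(TensorProduct.lift ((LinearMap.lsmul R P).comp f)
    $(LinearEquiv.congr_fun comm_self_eq_refl (x ⊗ₜ y)))).symm

end Module.Invertible

section Pairing

variable {R P Q : Type*} [CommRing R] [AddCommGroup P] [Module R P] [AddCommGroup Q] [Module R Q]
  (e : P ⊗[R] Q ≃ₗ[R] R)

theorem pairing_smul_comm_left (x y : P) (n : Q) :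
    e (x ⊗ₜ n) • y = e (y ⊗ₜ n) • x :=
  have := Module.Invertible.left e
  Module.Invertible.dual_apply_smul_comm ((curry e.toLinearMap).flip n) x y

theorem pairing_smul_comm_right (x : P) (n n' : Q) :
    e (x ⊗ₜ n) • n' = e (x ⊗ₜ n') • n :=
  have := Module.Invertible.right e
  Module.Invertible.dual_apply_smul_comm (curry e.toLinearMap x) n n'

theorem exists_finset_sum_pairing_eq_one :
    ∃ S : Finset (P × Q), ∑ s ∈ S, e (s.1 ⊗ₜ s.2) = 1 := by
  obtain ⟨S, hS⟩ := TensorProduct.exists_finset (e.symm 1)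
  exact ⟨S, by rw [← map_sum, ← hS, e.apply_symm_apply]⟩

theorem sum_pairing_smul_eq_self {ι : Type*} {S : Finset ι} {p : ι → P} {q : ι → Q}
    (hS : ∑ i ∈ S, e (p i ⊗ₜ q i) = 1) (x : P) :
    ∑ i ∈ S, e (x ⊗ₜ q i) • p i = x := by
  simp_rw [pairing_smul_comm_left e x, ← Finset.sum_smul, hS, one_smul]

end Pairing

theorem Ideal.Quotient.mk_apply_tmul_eq_of_mk_eq {R P Q : Type*} [CommRing R]
    [AddCommGroup P] [Module R P] [AddCommGroup Q] [Module R Q]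
    {F : Type*} [FunLike F (P ⊗[R] Q) R] [LinearMapClass F R _ R] (f : F)
    {K : Ideal R} {x x' : P} {n n' : Q}
    (hx : (Submodule.Quotient.mk x : P ⧸ K • (⊤ : Submodule R P)) = Submodule.Quotient.mk x')
    (hn : (Submodule.Quotient.mk n : Q ⧸ K • (⊤ : Submodule R Q)) =
      Submodule.Quotient.mk n') :
    Ideal.Quotient.mk K (f (x ⊗ₜ n)) = Ideal.Quotient.mk K (f (x' ⊗ₜ n')) := by
  rw [Submodule.Quotient.eq] at hx hn
  let g : P ⊗[R] Q →ₗ[R] R := f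
  have h₁ := Submodule.smul_top_le_comap_smul_top K ((curry g).flip n) hx
  have h₂ := Submodule.smul_top_le_comap_smul_top K (curry g x') hn
  simp only [Submodule.mem_comap, Ideal.smul_eq_mul, Ideal.mul_top, map_sub] at h₁ h₂
  rw [Ideal.Quotient.mk_eq_mk_iff_sub_mem]
  convert K.add_mem h₁ h₂ using 1
  simp [g]

section Descent

variable {A : Type*} {B L N : Type u} [CommRing A] [CommRing B] [Algebra B A]
  [AddCommGroup L] [Module A L] [Module B L]
  [AddCommGroup N] [Module A N] [Module B N] [IsScalarTower B A N]
  (e : L ⊗[A] N ≃ₗ[A] A) (M : Submodule B L)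

noncomputable def pairingDual : Submodule B N :=
  ⨅ m : M, (LinearMap.range (Algebra.linearMap B A)).comap
    ((curry e.toLinearMap (m : L)).restrictScalars B)

theorem mem_pairingDual {n : N} :
    n ∈ pairingDual e M ↔ ∀ m ∈ M, e (m ⊗ₜ n) ∈ Set.range (algebraMap B A) := by
  simp [pairingDual]

variable [IsScalarTower B A L] (hinj : Function.Injective (algebraMap B A))

noncomputable def restrictedPairing : M ⊗[B] pairingDual e M →ₗ[B] B :=
  TensorProduct.lift <| LinearMap.restrictScalarsRange₂ M.subtype (pairingDual e M).subtype
    (Algebra.linearMap B A) hinj (curry e.toLinearMap) fun m n =>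
      (mem_pairingDual e M).1 n.2 m m.2

@[simp]
theorem algebraMap_restrictedPairing_tmul (m : M) (n : pairingDual e M) :
    algebraMap B A (restrictedPairing e M hinj (m ⊗ₜ n)) = e (m ⊗ₜ n) := by
  rw [restrictedPairing, lift.tmul]
  exact LinearMap.restrictScalarsRange₂_apply _ _ (Algebra.linearMap B A) hinj _ _ m n

theorem restrictedPairing_smul_left_comm (m p : M) (p' : pairingDual e M) :
    restrictedPairing e M hinj (m ⊗ₜ p') • p =
      restrictedPairing e M hinj (p ⊗ₜ p') • m := by
  ext
  simpa [← algebraMap_smul A] using pairing_smul_comm_left e (m : L) p p'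

theorem restrictedPairing_smul_right_comm (m : M) (n p' : pairingDual e M) :
    restrictedPairing e M hinj (m ⊗ₜ n) • p' =
      restrictedPairing e M hinj (m ⊗ₜ p') • n := by
  ext
  simpa [← algebraMap_smul A] using pairing_smul_comm_right e (m : L) n p'

theorem restrictedPairing_smul_comm (z w : M ⊗[B] pairingDual e M) :
    restrictedPairing e M hinj z • w = restrictedPairing e M hinj w • z := by
  induction z using TensorProduct.induction_on with
  | zero => simp
  | add z z' hz hz' => simp [add_smul, smul_add, hz, hz']
  | tmul m n =>
    induction w using TensorProduct.induction_on with
    | zero => simp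
    | add w w' hw hw' => simp [add_smul, smul_add, hw, hw']
    | tmul p p' =>
      calc restrictedPairing e M hinj (m ⊗ₜ n) • (p ⊗ₜ p')
          = p ⊗ₜ (restrictedPairing e M hinj (m ⊗ₜ p') • n) := by
            rw [← tmul_smul, restrictedPairing_smul_right_comm]
        _ = restrictedPairing e M hinj (p ⊗ₜ p') • (m ⊗ₜ n) := by
            rw [← smul_tmul, restrictedPairing_smul_left_comm, smul_tmul']

theorem isInvertibleModule_of_surjective_restrictedPairing
    (h : Function.Surjective (restrictedPairing e M hinj)) : IsInvertibleModule B M := by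
  obtain ⟨u, hu⟩ := h 1
  refine ⟨pairingDual e M, inferInstance, inferInstance, ⟨LinearEquiv.ofLinearMap
    (restrictedPairing e M hinj) (LinearMap.toSpanSingleton B _ u) ?_ ?_⟩⟩
  · ext; simp [hu]
  · refine LinearMap.ext fun z => ?_
    simp [restrictedPairing_smul_comm e M hinj z u, hu]

theorem nonempty_baseChange_equiv_of_surjective_restrictedPairing
    (h : Function.Surjective (restrictedPairing e M hinj)) : Nonempty (A ⊗[B] M ≃ₗ[A] L) := by
  obtain ⟨u, hu⟩ := h 1
  obtain ⟨S, rfl⟩ := TensorProduct.exists_finset u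
  rw [map_sum] at hu
  let ν : L →ₗ[A] A ⊗[B] M :=
    ∑ s ∈ S, ((curry e.toLinearMap).flip s.2).smulRight ((1 : A) ⊗ₜ s.1)
  refine ⟨LinearEquiv.ofLinearMap (M.subtype.liftBaseChange A) ν ?_ ?_⟩
  · ext x
    have h1 : ∑ s ∈ S, e (s.1 ⊗ₜ s.2) = 1 := by
      simpa using congr(algebraMap B A $hu)
    simpa [ν] using sum_pairing_smul_eq_self e h1 x
  · refine AlgebraTensorModule.ext fun a m => ?_
    have hm : ∑ s ∈ S, restrictedPairing e M hinj (m ⊗ₜ s.2) • s.1 = m := by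
      simp_rw [restrictedPairing_smul_left_comm e M hinj m, ← Finset.sum_smul, hu, one_smul]
    simp only [ν, LinearMap.comp_apply, LinearMap.liftBaseChange_tmul, LinearMap.id_apply,
      map_smul, LinearMap.coe_sum, Finset.sum_apply, LinearMap.smulRight_apply,
      LinearMap.flip_apply, curry_apply, LinearEquiv.coe_coe, Submodule.subtype_apply]
    conv_rhs => rw [← hm, tmul_sum]
    rw [Finset.smul_sum]
    refine Finset.sum_congr rfl fun s _ => ?_
    rw [← algebraMap_restrictedPairing_tmul e M hinj, algebraMap_smul, ← tmul_smul, smul_tmul',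
      smul_eq_mul, mul_one]

end Descent

theorem Submodule.exists_mk_eq_mk_and_mk_eq_mk {R M : Type*} [CommRing R] [AddCommGroup M]
    [Module R M] {I J : Ideal R} (h : I ⊔ J = ⊤) (x y : M) :
    ∃ z : M,
      (Submodule.Quotient.mk z : M ⧸ I • (⊤ : Submodule R M)) = Submodule.Quotient.mk x ∧
      (Submodule.Quotient.mk z : M ⧸ J • (⊤ : Submodule R M)) = Submodule.Quotient.mk y := by
  obtain ⟨ε, hε, ε', hε', hsum⟩ :=
    Submodule.mem_sup.mp (h ▸ Submodule.mem_top : (1 : R) ∈ I ⊔ J)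
  refine ⟨ε' • x + ε • y, ?_, ?_⟩ <;> rw [Submodule.Quotient.eq]
  · convert Submodule.smul_mem_smul hε (Submodule.mem_top (x := y - x)) using 1
    linear_combination (norm := module) hsum • x
  · convert Submodule.smul_mem_smul hε' (Submodule.mem_top (x := x - y)) using 1
    linear_combination (norm := module) hsum • y

section Gluing

variable {A : Type*} {B L N : Type u} [CommRing A] [CommRing B] [Algebra B A] {I I' : Ideal A}
  {σ : (A ⧸ I) ≃+* (A ⧸ I')} [AddCommGroup L] [Module A L] [AddCommGroup N] [Module A N]
  (φ : (L ⧸ (I • (⊤ : Submodule A L))) ≃+ (L ⧸ (I' • (⊤ : Submodule A L))))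

/-- The descended bundle: sections of `L` whose restrictions to `D` and `D'` match under `φ`. -/
def equalizerSubmodule [Module B L] [IsScalarTower B A L]
    (hφB : ∀ (b : B) (m : L),
      φ (Submodule.Quotient.mk (b • m)) = b • φ (Submodule.Quotient.mk m)) :
    Submodule B L where
  carrier := {m | φ (Submodule.Quotient.mk m) = Submodule.Quotient.mk m}
  add_mem' {m m'} hm hm' := by
    simp only [Set.mem_ofPred_eq, Submodule.Quotient.mk_add, map_add] at hm hm' ⊢
    rw [hm, hm']
  zero_mem' := by simp
  smul_mem' b m hm := by
    simp only [Set.mem_ofPred_eq] at hm ⊢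
    rw [hφB, hm, Submodule.Quotient.mk_smul]

theorem exists_compatible_lift (hdisj : I ⊔ I' = ⊤) (x : L) :
    ∃ m : L, φ (Submodule.Quotient.mk m) = Submodule.Quotient.mk m ∧
      (Submodule.Quotient.mk m : L ⧸ I' • (⊤ : Submodule A L)) = Submodule.Quotient.mk x := by
  obtain ⟨y, hy⟩ := Submodule.Quotient.mk_surjective _ (φ.symm (Submodule.Quotient.mk x))
  obtain ⟨m, hmy, hmx⟩ := Submodule.exists_mk_eq_mk_and_mk_eq_mk hdisj y x
  exact ⟨m, by rw [hmy, hy, φ.apply_symm_apply, hmx], hmx⟩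

variable {φ} in
/-- `q'` lifts the image of `q` under the `σ⁻¹`-semilinear transpose of `φ`. -/
theorem exists_transpose_lift
    (hφ : ∀ (a b : A) (m : L), σ (Ideal.Quotient.mk I a) = Ideal.Quotient.mk I' b →
      φ (Submodule.Quotient.mk (a • m)) = b • φ (Submodule.Quotient.mk m))
    (e : L ⊗[A] N ≃ₗ[A] A) (q : N) :
    ∃ q' : N, ∀ m w : L, Submodule.Quotient.mk w = φ (Submodule.Quotient.mk m) →
      σ (Ideal.Quotient.mk I (e (m ⊗ₜ q'))) = Ideal.Quotient.mk I' (e (w ⊗ₜ q)) := by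
  obtain ⟨S, hS⟩ := exists_finset_sum_pairing_eq_one e
  choose w' hw' using fun s : L × N =>
    Submodule.Quotient.mk_surjective (I' • ⊤) (φ (Submodule.Quotient.mk s.1))
  choose a ha using fun s : L × N =>
    Ideal.Quotient.mk_surjective (σ.symm (Ideal.Quotient.mk I' (e (w' s ⊗ₜ q))))
  refine ⟨∑ s ∈ S, a s • s.2, fun m w hw => ?_⟩
  choose b hb using fun s : L × N =>
    Ideal.Quotient.mk_surjective (σ (Ideal.Quotient.mk I (e (m ⊗ₜ s.2))))
  have hw_sum : (Submodule.Quotient.mk w : L ⧸ I' • (⊤ : Submodule A L)) =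
      Submodule.Quotient.mk (∑ s ∈ S, b s • w' s) := by
    rw [hw, ← sum_pairing_smul_eq_self e hS m, ← Submodule.mkQ_apply, ← Submodule.mkQ_apply,
      map_sum, map_sum, map_sum]
    refine Finset.sum_congr rfl fun s _ => ?_
    rw [Submodule.mkQ_apply, Submodule.mkQ_apply, hφ _ _ _ (hb s).symm, Submodule.Quotient.mk_smul,
      hw']
  calc σ (Ideal.Quotient.mk I (e (m ⊗ₜ ∑ s ∈ S, a s • s.2)))
      = Ideal.Quotient.mk I' (∑ s ∈ S, b s * e (w' s ⊗ₜ q)) := by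
        simp [tmul_sum, ha, hb, mul_comm]
    _ = Ideal.Quotient.mk I' (e (w ⊗ₜ q)) := by
        rw [Ideal.Quotient.mk_apply_tmul_eq_of_mk_eq e hw_sum rfl]
        simp [sum_tmul, ← smul_tmul']

variable {φ} in
theorem exists_dual_compatible_lift (hdisj : I ⊔ I' = ⊤)
    (hφ : ∀ (a b : A) (m : L), σ (Ideal.Quotient.mk I a) = Ideal.Quotient.mk I' b →
      φ (Submodule.Quotient.mk (a • m)) = b • φ (Submodule.Quotient.mk m))
    (e : L ⊗[A] N ≃ₗ[A] A) (q : N) :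
    ∃ n : N, (∀ m : L, φ (Submodule.Quotient.mk m) = Submodule.Quotient.mk m →
        σ (Ideal.Quotient.mk I (e (m ⊗ₜ n))) = Ideal.Quotient.mk I' (e (m ⊗ₜ n))) ∧
      (Submodule.Quotient.mk n : N ⧸ I' • (⊤ : Submodule A N)) = Submodule.Quotient.mk q := by
  obtain ⟨q', hq'⟩ := exists_transpose_lift hφ e q
  obtain ⟨n, hn, hn'⟩ := Submodule.exists_mk_eq_mk_and_mk_eq_mk hdisj q' q
  refine ⟨n, fun m hm => ?_, hn'⟩
  rw [Ideal.Quotient.mk_apply_tmul_eq_of_mk_eq e rfl hn,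
    Ideal.Quotient.mk_apply_tmul_eq_of_mk_eq e rfl hn', hq' m m hm.symm]

theorem algebraMap_mem_left_of_mem_right
    (hσ : ∀ b : B, σ (Ideal.Quotient.mk I (algebraMap B A b)) =
      Ideal.Quotient.mk I' (algebraMap B A b))
    {b : B} (hb : algebraMap B A b ∈ I') : algebraMap B A b ∈ I := by
  rw [← Ideal.Quotient.eq_zero_iff_mem] at hb ⊢
  exact σ.injective (by rw [hσ, hb, map_zero])

theorem mem_range_of_mem_inf
    (hB : Set.range (algebraMap B A) =
      {a : A | σ (Ideal.Quotient.mk I a) = Ideal.Quotient.mk I' a})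
    {a : A} (ha : a ∈ I ⊓ I') : a ∈ Set.range (algebraMap B A) := by
  rw [hB, Set.mem_ofPred_eq, Ideal.Quotient.eq_zero_iff_mem.mpr ha.1,
    Ideal.Quotient.eq_zero_iff_mem.mpr ha.2, map_zero]

variable [Module B L] [IsScalarTower B A L] [Module B N] [IsScalarTower B A N]
  (hinj : Function.Injective (algebraMap B A))

theorem range_restrictedPairing_sup_eq_top (hdisj : I ⊔ I' = ⊤)
    (hB : Set.range (algebraMap B A) =
      {a : A | σ (Ideal.Quotient.mk I a) = Ideal.Quotient.mk I' a})
    (hφ : ∀ (a b : A) (m : L), σ (Ideal.Quotient.mk I a) = Ideal.Quotient.mk I' b →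
      φ (Submodule.Quotient.mk (a • m)) = b • φ (Submodule.Quotient.mk m))
    (hφB : ∀ (b : B) (m : L),
      φ (Submodule.Quotient.mk (b • m)) = b • φ (Submodule.Quotient.mk m))
    (e : L ⊗[A] N ≃ₗ[A] A) :
    LinearMap.range (restrictedPairing e (equalizerSubmodule φ hφB) hinj) ⊔
      (I ⊓ I').comap (algebraMap B A) = ⊤ := by
  set M := equalizerSubmodule φ hφB
  obtain ⟨S, hS⟩ := exists_finset_sum_pairing_eq_one e
  choose m hm hm' using fun s : L × N => exists_compatible_lift φ hdisj s.1
  choose n hn hn' using fun s : L × N => exists_dual_compatible_lift hdisj hφ e s.2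
  let t : M ⊗[B] pairingDual e M := ∑ s ∈ S, (⟨m s, hm s⟩ : M) ⊗ₜ
    (⟨n s, (mem_pairingDual e M).2 fun x hx => hB.superset (hn s x hx)⟩ : pairingDual e M)
  have ht : algebraMap B A (1 - restrictedPairing e M hinj t) ∈ I' := by
    rw [← Ideal.Quotient.eq_zero_iff_mem, map_sub, map_sub, map_one, ← hS, sub_eq_zero]
    simp only [t, map_sum, algebraMap_restrictedPairing_tmul]
    exact Finset.sum_congr rfl fun s _ =>
      Ideal.Quotient.mk_apply_tmul_eq_of_mk_eq e (hm' s).symm (hn' s).symm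
  rw [Ideal.eq_top_iff_one]
  exact Submodule.mem_sup.mpr ⟨_, LinearMap.mem_range_self _ t, _,
    ⟨algebraMap_mem_left_of_mem_right (fun b => hB.subset ⟨b, rfl⟩) ht, ht⟩,
    add_sub_cancel _ _⟩

theorem sq_le_range_restrictedPairing
    (hB : Set.range (algebraMap B A) =
      {a : A | σ (Ideal.Quotient.mk I a) = Ideal.Quotient.mk I' a})
    (hφB : ∀ (b : B) (m : L),
      φ (Submodule.Quotient.mk (b • m)) = b • φ (Submodule.Quotient.mk m))
    (e : L ⊗[A] N ≃ₗ[A] A) :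
    ((I ⊓ I').comap (algebraMap B A)) ^ 2 ≤
      LinearMap.range (restrictedPairing e (equalizerSubmodule φ hφB) hinj) := by
  set M := equalizerSubmodule φ hφB
  rw [sq, Ideal.mul_le]
  intro β hβ γ hγ
  have hM : ∀ x : L, β • x ∈ M := fun x => by
    change φ _ = _
    rw [← algebraMap_smul A β x,
      (Submodule.Quotient.mk_eq_zero _).2 (Submodule.smul_mem_smul hβ.1 Submodule.mem_top),
      (Submodule.Quotient.mk_eq_zero _).2 (Submodule.smul_mem_smul hβ.2 Submodule.mem_top),
      map_zero]
  have hM' : ∀ q : N, γ • q ∈ pairingDual e M := fun q =>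
    (mem_pairingDual e M).2 fun x _ => by
      rw [← algebraMap_smul A, tmul_smul, map_smul, smul_eq_mul]
      exact mem_range_of_mem_inf hB ⟨I.mul_mem_right _ hγ.1, I'.mul_mem_right _ hγ.2⟩
  obtain ⟨S, hS⟩ := exists_finset_sum_pairing_eq_one e
  refine ⟨∑ s ∈ S, (⟨β • s.1, hM s.1⟩ : M) ⊗ₜ
    (⟨γ • s.2, hM' s.2⟩ : pairingDual e M), hinj ?_⟩
  simp [← algebraMap_smul A, ← smul_tmul', ← Finset.mul_sum, hS, mul_comm]

end Gluing

/-- affine model of the pushout: `X = Spec A`, the two disjoint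
divisors `D, D'` have ideals `I, I'` with `I + I' = A`, the gluing isomorphism is
`σ : A/I ≅ A/I'`, and the pushout `Y = Spec B` where `B ⊆ A` is the equalizer
subring `{a : σ(a mod I) = a mod I'}` (`ν` corresponds to `B ↪ A`).  Let `L` be a
line bundle (invertible `A`-module) with a gluing isomorphism
`φ : L/IL ≅ L/I'L` which is `σ`-semilinear (it covers `σ`).  Then `L` descends:
the `B`-submodule `{m : φ(m mod IL) = m mod I'L}` of `L` is an invertible
`B`-module `𝓛` with `A ⊗_B 𝓛 ≅ L` (i.e. `ν^*𝓛 ≅ L`). -/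
theorem descend_line_bundle_along_pushout
    {A : Type u} [CommRing A] {B : Type u} [CommRing B] [Algebra B A]
    (hinj : Function.Injective (algebraMap B A))
    (I I' : Ideal A) (hdisj : I ⊔ I' = ⊤)
    (σ : (A ⧸ I) ≃+* (A ⧸ I'))
    (hB : Set.range (algebraMap B A) =
      {a : A | σ (Ideal.Quotient.mk I a) = Ideal.Quotient.mk I' a})
    (L : Type u) [AddCommGroup L] [Module A L] [Module B L] [IsScalarTower B A L]
    (hL : IsInvertibleModule A L)
    (φ : (L ⧸ (I • (⊤ : Submodule A L))) ≃+ (L ⧸ (I' • (⊤ : Submodule A L))))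
    (hφ : ∀ (a b : A) (m : L),
      σ (Ideal.Quotient.mk I a) = Ideal.Quotient.mk I' b →
      φ (Submodule.Quotient.mk (a • m)) = b • φ (Submodule.Quotient.mk m)) :
    ∃ M : Submodule B L,
      (∀ m : L, m ∈ M ↔
        φ (Submodule.Quotient.mk m) = Submodule.Quotient.mk m) ∧
      IsInvertibleModule B M ∧
      Nonempty ((TensorProduct B A M) ≃ₗ[A] L) := by
  obtain ⟨N, _, _, ⟨e⟩⟩ := hL
  let _ : Module B N := Module.compHom N (algebraMap B A)
  have : IsScalarTower B A N := .of_algebraMap_smul fun _ _ => rfl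
  have hφB : ∀ (b : B) (m : L),
      φ (Submodule.Quotient.mk (b • m)) = b • φ (Submodule.Quotient.mk m) := fun b m => by
    rw [← algebraMap_smul A b m, hφ _ _ m (hB.subset ⟨b, rfl⟩), algebraMap_smul]
  have hF : Function.Surjective (restrictedPairing e (equalizerSubmodule φ hφB) hinj) := by
    rw [← LinearMap.range_eq_top]
    have hJ := Ideal.sup_pow_eq_top (n := 2)
      (range_restrictedPairing_sup_eq_top φ hinj hdisj hB hφ hφB e)
    rwa [sup_eq_left.mpr (sq_le_range_restrictedPairing φ hinj hB hφB e)] at hJ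
  exact ⟨_, fun _ => Iff.rfl, isInvertibleModule_of_surjective_restrictedPairing e _ hinj hF,
    nonempty_baseChange_equiv_of_surjective_restrictedPairing e _ hinj hF⟩
end
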